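/- arXiv:1811.01783 — 3 statements merged into one kernel-verified Lean document; each statement's English description precedes it below -/
import Mathlib

section
/- Let n ≥ 1, M ∈ ℤ^{n×n} with det M ≠ 0, G = ℤ^n ⧸ Mℤ^n, and let L : (G → ℂ^m) → (G → ℂ^m) be the multiplication operator with multipliers m_L : G → ℂ^{m×m}. Then the spectrum of L, viewed as a ℂ-linear endomorphism of the finite-dimensional space of functions G → ℂ^m, equals the union, over κ ranging over a complete set of representatives of ℤ^n ⧸ M^Tℤ^n, of the spectra of the m×m symbol matrices L_{M^{-T}κ} = ∑_{y∈G} m_L(y) χ_{M^{-T}κ}(y). -/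
open Matrix

/-- The lattice torus `ℤⁿ ⧸ Mℤⁿ`. -/
abbrev LatticeTorus (n : ℕ) (M : Matrix (Fin n) (Fin n) ℤ) :=
  (Fin n → ℤ) ⧸ LinearMap.range (Matrix.mulVecLin M)

/-- The spectrum of a multiplication operator `L` on `G = ℤⁿ ⧸ Mℤⁿ` (as an endomorphism of
the space of functions `G → ℂᵐ`) equals the union, over `κ` ranging over a complete set of
representatives of `ℤⁿ ⧸ Mᵀℤⁿ`, of the spectra of the symbol matrices
`L_{M^{-T}κ} = ∑_y m_L(y) χ_{M^{-T}κ}(y)`. -/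
theorem multiplication_operator_spectrum
    (n m : ℕ) (hn : 1 ≤ n)
    (M : Matrix (Fin n) (Fin n) ℤ) (hdet : M.det ≠ 0)
    [Fintype (LatticeTorus n M)]
    (mL : LatticeTorus n M → Matrix (Fin m) (Fin m) ℂ)
    (L : (LatticeTorus n M → Fin m → ℂ) →ₗ[ℂ] (LatticeTorus n M → Fin m → ℂ))
    (hL : ∀ (f : LatticeTorus n M → Fin m → ℂ) (x : LatticeTorus n M),
      L f x = ∑ y : LatticeTorus n M, (mL y).mulVec (f (x + y)))
    (rep : LatticeTorus n Mᵀ → (Fin n → ℤ))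
    (hrep : ∀ c : LatticeTorus n Mᵀ,
      (Submodule.Quotient.mk (rep c) : LatticeTorus n Mᵀ) = c)
    (χ : LatticeTorus n Mᵀ → LatticeTorus n M → ℂ)
    (hχ : ∀ (c : LatticeTorus n Mᵀ) (y : Fin n → ℤ),
      χ c (Submodule.Quotient.mk y) =
        Complex.exp (2 * (Real.pi : ℂ) * Complex.I *
          ((∑ i : Fin n,
            ((M.map (Int.cast : ℤ → ℝ))ᵀ)⁻¹.mulVec (fun i' => (rep c i' : ℝ)) i
              * (y i : ℝ) : ℝ) : ℂ))) :
    spectrum ℂ (L : Module.End ℂ (LatticeTorus n M → Fin m → ℂ)) =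
      ⋃ c : LatticeTorus n Mᵀ,
        spectrum ℂ (∑ y : LatticeTorus n M, χ c y • mL y) := by
    classical
  -- rewritten character formula, with the frequency vector
  set k : LatticeTorus n Mᵀ → Fin n → ℝ :=
    fun c => ((M.map (Int.cast : ℤ → ℝ))ᵀ)⁻¹.mulVec (fun i' => (rep c i' : ℝ)) with hk
  have hχ' : ∀ (c : LatticeTorus n Mᵀ) (y : Fin n → ℤ),
      χ c (Submodule.Quotient.mk y) =
        Complex.exp (2 * (Real.pi : ℂ) * Complex.I *
          (∑ i : Fin n, (k c i : ℂ) * (y i : ℂ))) := by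
    intro c y
    rw [hχ]
    norm_cast
  -- multiplicativity of characters
  have hadd : ∀ (c : LatticeTorus n Mᵀ) (x y : LatticeTorus n M),
      χ c (x + y) = χ c x * χ c y := by
    intro c x y
    obtain ⟨a, rfl⟩ := Submodule.Quotient.mk_surjective _ x
    obtain ⟨b, rfl⟩ := Submodule.Quotient.mk_surjective _ y
    rw [← Submodule.Quotient.mk_add, hχ', hχ', hχ', ← Complex.exp_add, ← mul_add,
      ← Finset.sum_add_distrib]
    congr 2
    refine Finset.sum_congr rfl fun i _ => ?_
    simp only [Pi.add_apply]
    push_cast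
    ring
  have hzero : ∀ c : LatticeTorus n Mᵀ, χ c 0 = 1 := by
    intro c
    have h0 : (0 : LatticeTorus n M) = Submodule.Quotient.mk 0 := rfl
    rw [h0, hχ']
    simp
  -- characters as bundled `AddChar`s
  set ψ : LatticeTorus n Mᵀ → AddChar (LatticeTorus n M) ℂ := fun c =>
    { toFun := χ c
      map_zero_eq_one' := hzero c
      map_add_eq_mul' := hadd c } with hψ
  have hψcoe : ∀ c, ⇑(ψ c) = χ c := fun c => rfl
  -- real/complex determinant facts
  have hdetR : ((M.map (Int.cast : ℤ → ℝ))ᵀ).det ≠ 0 := by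
    rw [Matrix.det_transpose]
    have h1 : (M.map (Int.cast : ℤ → ℝ)) = (Int.castRingHom ℝ).mapMatrix M := rfl
    rw [h1, ← RingHom.map_det]
    simpa using hdet
  have hkey : ∀ c : LatticeTorus n Mᵀ,
      ((M.map (Int.cast : ℤ → ℝ))ᵀ).mulVec (k c) = fun i => (rep c i : ℝ) := by
    intro c
    rw [hk]
    rw [Matrix.mulVec_mulVec, Matrix.mul_nonsing_inv _ (isUnit_iff_ne_zero.mpr hdetR),
      Matrix.one_mulVec]
  have hcastMul : ∀ (z : Fin n → ℤ),
      ((M.map (Int.cast : ℤ → ℝ))ᵀ).mulVec (fun j => (z j : ℝ)) =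
        fun i => ((Mᵀ.mulVec z) i : ℝ) := by
    intro z
    funext i
    simp only [Matrix.mulVec, dotProduct, Matrix.transpose_apply, Matrix.map_apply]
    push_cast
    rfl
  have hsingle : ∀ (c : LatticeTorus n Mᵀ) (j : Fin n),
      χ c (Submodule.Quotient.mk (Pi.single j 1)) =
        Complex.exp (2 * (Real.pi : ℂ) * Complex.I * (k c j : ℂ)) := by
    intro c j
    rw [hχ']
    congr 1
    congr 1
    rw [Finset.sum_eq_single j]
    · simp
    · intro i _ hij
      simp [Pi.single_apply, hij]
    · simp
  have hψinj : Function.Injective ψ := by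
    intro c c' hcc
    have hχeq : ∀ x, χ c x = χ c' x := fun x => by
      rw [← hψcoe c, ← hψcoe c', hcc]
    have hint : ∀ j : Fin n, ∃ d : ℤ, k c j = k c' j + d := by
      intro j
      have := (hsingle c j).symm.trans ((hχeq _).trans (hsingle c' j))
      rw [Complex.exp_eq_exp_iff_exists_int] at this
      obtain ⟨d, hd⟩ := this
      refine ⟨d, ?_⟩
      have h2 : (2 * (Real.pi : ℂ) * Complex.I) ≠ 0 := by
        simp [Real.pi_ne_zero, Complex.I_ne_zero]
      have : (2 * (Real.pi : ℂ) * Complex.I) * (k c j : ℂ) =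
          (2 * (Real.pi : ℂ) * Complex.I) * ((k c' j : ℂ) + d) := by
        rw [hd]; ring
      have := mul_left_cancel₀ h2 this
      exact_mod_cast this
    choose d hd using hint
    have hmem : rep c - rep c' ∈ LinearMap.range (Matrix.mulVecLin Mᵀ) := by
      refine ⟨d, ?_⟩
      have hR : (fun i => ((Mᵀ.mulVec d) i : ℝ)) = fun i => ((rep c i - rep c' i : ℤ) : ℝ) := by
        rw [← hcastMul]
        have : (fun j => ((d j : ℝ))) = k c - k c' := by
          funext j
          have := hd j
          simp [this]
        rw [this, Matrix.mulVec_sub, hkey, hkey]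
        funext i
        simp
      have : Mᵀ.mulVec d = fun i => rep c i - rep c' i := by
        funext i
        have := congrFun hR i
        exact_mod_cast this
      rw [Matrix.mulVecLin_apply, this]
      rfl
    have := (Submodule.Quotient.eq (LinearMap.range (Matrix.mulVecLin Mᵀ))).mpr hmem
    rw [hrep, hrep] at this
    exact this
  have hψsurj : Function.Surjective ψ := by
    intro φ
    -- logarithms of the values of φ on the standard basis vectors
    have hφne : ∀ x : LatticeTorus n M, φ x ≠ 0 := by
      intro x
      have h1 : φ x * φ (-x) = 1 := by
        rw [← AddChar.map_add_eq_mul]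
        simp
      exact left_ne_zero_of_mul_eq_one h1
    set t : Fin n → ℂ := fun j =>
      Complex.log (φ (Submodule.Quotient.mk (Pi.single j 1))) / (2 * (Real.pi : ℂ) * Complex.I)
      with ht
    have h2pi : (2 * (Real.pi : ℂ) * Complex.I) ≠ 0 := by
      simp [Real.pi_ne_zero, Complex.I_ne_zero]
    have htexp : ∀ j, Complex.exp (2 * (Real.pi : ℂ) * Complex.I * t j) =
        φ (Submodule.Quotient.mk (Pi.single j 1)) := by
      intro j
      rw [ht]
      rw [mul_div_cancel₀ _ h2pi]
      exact Complex.exp_log (hφne _)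
    -- a product formula for φ
    have hprod : ∀ (s : Finset (Fin n)) (g : Fin n → LatticeTorus n M),
        φ (∑ j ∈ s, g j) = ∏ j ∈ s, φ (g j) := by
      intro s g
      induction s using Finset.cons_induction with
      | empty => simp
      | cons a s ha ih =>
        rw [Finset.sum_cons, Finset.prod_cons, AddChar.map_add_eq_mul, ih]
    -- the value of φ on any point of the torus
    have hmk : ∀ v : Fin n → ℤ, (Submodule.Quotient.mk v : LatticeTorus n M) =
        (LinearMap.range (Matrix.mulVecLin M)).mkQ v := fun v => rfl
    have hφy : ∀ y : Fin n → ℤ, φ (Submodule.Quotient.mk y) =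
        Complex.exp (2 * (Real.pi : ℂ) * Complex.I * (∑ j, t j * (y j : ℂ))) := by
      intro y
      have hy : (Submodule.Quotient.mk y : LatticeTorus n M) =
          ∑ j, (y j) • (Submodule.Quotient.mk (Pi.single j 1) : LatticeTorus n M) := by
        have h1 : y = ∑ j, Pi.single j (y j) := (Finset.univ_sum_single y).symm
        conv_lhs => rw [h1]
        rw [hmk, map_sum]
        refine Finset.sum_congr rfl fun j _ => ?_
        have h2 : Pi.single j (y j) = (y j) • (Pi.single j (1 : ℤ) : Fin n → ℤ) := by
          funext i
          by_cases hij : i = j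
          · subst hij; simp
          · simp [Pi.single_apply, hij]
        rw [h2, _root_.map_smul]
        rfl
      rw [hy, hprod, Finset.mul_sum, Complex.exp_sum]
      refine Finset.prod_congr rfl fun j _ => ?_
      rw [AddChar.map_zsmul_eq_zpow, ← htexp j, ← Complex.exp_int_mul]
      ring_nf
    -- the frequencies of φ assemble into an integer vector modulo Mᵀ
    have hκ : ∀ l : Fin n, ∃ d : ℤ, ∑ j, t j * (M j l : ℂ) = d := by
      intro l
      have hmem : (Submodule.Quotient.mk (M.mulVec (Pi.single l 1)) : LatticeTorus n M)
          = 0 := by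
        rw [Submodule.Quotient.mk_eq_zero]
        exact ⟨Pi.single l 1, rfl⟩
      have h1 := hφy (M.mulVec (Pi.single l 1))
      rw [hmem, AddChar.map_zero_eq_one] at h1
      have h2 : ∑ j, t j * ((M.mulVec (Pi.single l 1) j : ℤ) : ℂ) = ∑ j, t j * (M j l : ℂ) := by
        refine Finset.sum_congr rfl fun j _ => ?_
        congr 2
        simp [Matrix.mulVec_single]
      rw [h2] at h1
      obtain ⟨d, hd⟩ := Complex.exp_eq_one_iff.mp h1.symm
      refine ⟨d, ?_⟩
      have h3 : (2 * (Real.pi : ℂ) * Complex.I) * (∑ j, t j * (M j l : ℂ)) =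
          (2 * (Real.pi : ℂ) * Complex.I) * (d : ℂ) := by
        rw [hd]; ring
      exact mul_left_cancel₀ h2pi h3
    choose κ hκ using hκ
    refine ⟨Submodule.Quotient.mk κ, ?_⟩
    set c : LatticeTorus n Mᵀ := Submodule.Quotient.mk κ with hc
    -- rep c - κ lies in Mᵀℤⁿ
    obtain ⟨z, hz⟩ : rep c - κ ∈ LinearMap.range (Matrix.mulVecLin Mᵀ) := by
      refine (Submodule.Quotient.eq _).mp ?_
      rw [hrep c]
    -- conclude k c = t + z over ℂ
    have hdetC : ((M.map (Int.cast : ℤ → ℂ))ᵀ).det ≠ 0 := by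
      rw [Matrix.det_transpose]
      have h1 : (M.map (Int.cast : ℤ → ℂ)) = (Int.castRingHom ℂ).mapMatrix M := rfl
      rw [h1, ← RingHom.map_det]
      simpa using hdet
    have hkt : ∀ j, (k c j : ℂ) = t j + (z j : ℂ) := by
      have h0 : ((M.map (Int.cast : ℤ → ℂ))ᵀ).mulVec
          (fun j => (k c j : ℂ) - t j - (z j : ℂ)) = 0 := by
        funext i
        have e1 : ∑ j, ((M j i : ℝ)) * k c j = (rep c i : ℝ) := by
          have := congrFun (hkey c) i
          simpa [Matrix.mulVec, dotProduct, Matrix.transpose_apply,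
            Matrix.map_apply] using this
        have e1' : ∑ j, ((M j i : ℂ)) * (k c j : ℂ) = ((rep c i : ℤ) : ℂ) := by
          have := congrArg (Complex.ofReal) e1
          push_cast at this ⊢
          convert this using 2
        have e2 : ∑ j, ((M j i : ℂ)) * t j = ((κ i : ℤ) : ℂ) := by
          rw [← hκ i]
          refine Finset.sum_congr rfl fun j _ => mul_comm _ _
        have e3 : ∑ j, ((M j i : ℂ)) * (z j : ℂ) = ((rep c i - κ i : ℤ) : ℂ) := by
          have := congrFun hz i
          have h4 : ∑ j, (M j i) * z j = rep c i - κ i := by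
            simpa [Matrix.mulVecLin_apply, Matrix.mulVec, Matrix.vecMul, dotProduct,
              Matrix.transpose_apply, Pi.sub_apply, mul_comm] using this
          rw [← h4]
          push_cast
          rfl
        simp only [Matrix.mulVec, dotProduct, Matrix.transpose_apply,
          Matrix.map_apply, Pi.zero_apply]
        have : ∑ j, ((M j i : ℂ)) * ((k c j : ℂ) - t j - (z j : ℂ)) =
            (∑ j, ((M j i : ℂ)) * (k c j : ℂ)) - (∑ j, ((M j i : ℂ)) * t j)
              - (∑ j, ((M j i : ℂ)) * (z j : ℂ)) := by
          rw [← Finset.sum_sub_distrib, ← Finset.sum_sub_distrib]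
          refine Finset.sum_congr rfl fun j _ => by ring
        rw [this, e1', e2, e3]
        push_cast
        ring
      have h5 : (fun j => (k c j : ℂ) - t j - (z j : ℂ)) = 0 := by
        have h6 := congrArg (fun w => (((M.map (Int.cast : ℤ → ℂ))ᵀ)⁻¹).mulVec w) h0
        simpa [Matrix.mulVec_mulVec,
          Matrix.nonsing_inv_mul _ (isUnit_iff_ne_zero.mpr hdetC),
          Matrix.one_mulVec, Matrix.mulVec_zero] using h6
      intro j
      have := congrFun h5 j
      simp only [Pi.zero_apply] at this
      linear_combination this
    -- finally, ψ c = φ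
    refine DFunLike.ext _ _ fun x => ?_
    obtain ⟨y, rfl⟩ := Submodule.Quotient.mk_surjective _ x
    rw [hψcoe, hχ', hφy]
    have : (∑ i, (k c i : ℂ) * (y i : ℂ)) =
        (∑ j, t j * (y j : ℂ)) + ((∑ j, z j * y j : ℤ) : ℂ) := by
      push_cast
      rw [← Finset.sum_add_distrib]
      refine Finset.sum_congr rfl fun j _ => ?_
      rw [hkt j]
      ring
    rw [this, mul_add, Complex.exp_add]
    rw [show (2 * (Real.pi : ℂ) * Complex.I) * ((∑ j, z j * y j : ℤ) : ℂ) =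
      ((∑ j, z j * y j : ℤ) : ℂ) * (2 * (Real.pi : ℂ) * Complex.I) from mul_comm _ _]
    rw [Complex.exp_int_mul_two_pi_mul_I, mul_one]
  -- the dual torus is finite and in bijection with the character group
  have hfinH : Finite (LatticeTorus n Mᵀ) := Finite.of_injective ψ hψinj
  letI : Fintype (LatticeTorus n Mᵀ) := Fintype.ofFinite _
  set e : LatticeTorus n Mᵀ ≃ AddChar (LatticeTorus n M) ℂ :=
    Equiv.ofBijective ψ ⟨hψinj, hψsurj⟩ with he
  set B : Module.Basis (LatticeTorus n Mᵀ) ℂ (LatticeTorus n M → ℂ) :=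
    (AddChar.complexBasis (LatticeTorus n M)).reindex e.symm with hB
  have hBc : ∀ c, B c = χ c := by
    intro c
    rw [hB, Module.Basis.reindex_apply, Equiv.symm_symm, AddChar.complexBasis_apply]
    exact hψcoe c
  -- the Fourier synthesis map
  set Φ : (LatticeTorus n Mᵀ → Fin m → ℂ) →ₗ[ℂ] (LatticeTorus n M → Fin m → ℂ) :=
    { toFun := fun v x => ∑ c, χ c x • v c
      map_add' := by
        intro v w
        funext x
        simp [Finset.sum_add_distrib, smul_add]
      map_smul' := by
        intro a v
        funext x
        rw [RingHom.id_apply, Pi.smul_apply, Finset.smul_sum]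
        refine Finset.sum_congr rfl fun c _ => ?_
        rw [Pi.smul_apply]
        exact smul_comm _ _ _ } with hΦ
  have hΦapp : ∀ v x, Φ v x = ∑ c, χ c x • v c := fun v x => rfl
  have hΦinj : Function.Injective Φ := by
    have h0 : ∀ v, Φ v = 0 → v = 0 := by
      intro v hv
      funext c j
      have hli := Fintype.linearIndependent_iff.mp B.linearIndependent (fun c => v c j) ?_ c
      · exact hli
      · funext x
        have h1 := congrFun (congrFun hv x) j
        rw [hΦapp] at h1
        simp only [Finset.sum_apply, Pi.smul_apply, smul_eq_mul, Pi.zero_apply] at h1 ⊢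
        rw [← h1]
        refine Finset.sum_congr rfl fun c _ => ?_
        rw [hBc c]
        ring
    intro v w hvw
    have := h0 (v - w) (by rw [map_sub, hvw, sub_self])
    exact sub_eq_zero.mp this
  have hcard : Fintype.card (LatticeTorus n Mᵀ) = Fintype.card (LatticeTorus n M) := by
    rw [Fintype.card_congr e, AddChar.card_eq]
  have hfr : Module.finrank ℂ (LatticeTorus n Mᵀ → Fin m → ℂ) =
      Module.finrank ℂ (LatticeTorus n M → Fin m → ℂ) := by
    simp only [Module.finrank_pi_fintype, Module.finrank_self, Finset.sum_const,
      Finset.card_univ, smul_eq_mul, mul_one, Fintype.card_fin]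
    rw [hcard]
  set ΦE := LinearMap.linearEquivOfInjective Φ hΦinj hfr with hΦE
  have hΦEapp : ∀ v, ΦE v = Φ v := fun v => rfl
  have hΦsurj : Function.Surjective Φ := by
    intro f
    exact ⟨ΦE.symm f, by rw [← hΦEapp, LinearEquiv.apply_symm_apply]⟩
  -- the symbol matrices
  set Lc : LatticeTorus n Mᵀ → Matrix (Fin m) (Fin m) ℂ :=
    fun c => ∑ y, χ c y • mL y with hLcdef
  -- matrix sums act on vectors summandwise
  have hsum_mulVec : ∀ (A : LatticeTorus n M → Matrix (Fin m) (Fin m) ℂ) (w : Fin m → ℂ),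
      (∑ y, A y).mulVec w = ∑ y, (A y).mulVec w := by
    intro A w
    funext i
    simp only [Matrix.mulVec, dotProduct, Matrix.sum_apply, Finset.sum_apply,
      Finset.sum_mul]
    rw [Finset.sum_comm]
  -- the intertwining relation
  have hint : ∀ v, L (Φ v) = Φ (fun c => (Lc c).mulVec (v c)) := by
    intro v
    funext x
    rw [hL, hΦapp]
    have h1 : ∀ y : LatticeTorus n M, (mL y).mulVec ((Φ v) (x + y)) =
        ∑ c, (χ c x * χ c y) • (mL y).mulVec (v c) := by
      intro y
      rw [hΦapp]
      rw [show ((mL y).mulVec (∑ c, χ c (x + y) • v c)) =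
          ∑ c, (mL y).mulVec (χ c (x + y) • v c) from ?_]
      · refine Finset.sum_congr rfl fun c _ => ?_
        rw [Matrix.mulVec_smul, hadd]
      · exact map_sum ((mL y).mulVecLin) _ _
    rw [Finset.sum_congr rfl (fun y _ => h1 y), Finset.sum_comm]
    refine Finset.sum_congr rfl fun c _ => ?_
    rw [hLcdef, hsum_mulVec, Finset.smul_sum]
    refine Finset.sum_congr rfl fun y _ => ?_
    rw [Matrix.smul_mulVec]
    exact mul_smul _ _ _
  -- the block diagonal operator
  set D : (LatticeTorus n Mᵀ → Fin m → ℂ) →ₗ[ℂ] (LatticeTorus n Mᵀ → Fin m → ℂ) :=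
    { toFun := fun v c => (Lc c).mulVec (v c)
      map_add' := by
        intro v w
        funext c
        simp [Matrix.mulVec_add]
      map_smul' := by
        intro a v
        funext c
        simp [Matrix.mulVec_smul] } with hD
  have hDapp : ∀ v c, D v c = (Lc c).mulVec (v c) := fun v c => rfl
  -- final spectrum computation
  refine Set.ext fun lam => ?_
  have hspecMat : ∀ c : LatticeTorus n Mᵀ, lam ∈ spectrum ℂ (Lc c) ↔
      ∃ u : Fin m → ℂ, u ≠ 0 ∧ (Lc c).mulVec u = lam • u := by
    intro c
    rw [← AlgEquiv.spectrum_eq (Matrix.toLinAlgEquiv' (R := ℂ) (n := Fin m)) (Lc c),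
      ← Module.End.hasEigenvalue_iff_mem_spectrum, Module.End.hasEigenvalue_iff,
      Submodule.ne_bot_iff]
    constructor
    · rintro ⟨u, hu1, hu2⟩
      refine ⟨u, hu2, ?_⟩
      have h3 := Module.End.mem_eigenspace_iff.mp hu1
      simpa [Matrix.toLinAlgEquiv'_apply, Matrix.toLin'_apply] using h3
    · rintro ⟨u, hu1, hu2⟩
      refine ⟨u, ?_, hu1⟩
      rw [Module.End.mem_eigenspace_iff]
      simpa [Matrix.toLinAlgEquiv'_apply, Matrix.toLin'_apply] using hu2
  have hspecL : lam ∈ spectrum ℂ (L : Module.End ℂ (LatticeTorus n M → Fin m → ℂ)) ↔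
      ∃ f, f ≠ 0 ∧ L f = lam • f := by
    rw [← Module.End.hasEigenvalue_iff_mem_spectrum, Module.End.hasEigenvalue_iff,
      Submodule.ne_bot_iff]
    constructor
    · rintro ⟨f, hf1, hf2⟩
      exact ⟨f, hf2, Module.End.mem_eigenspace_iff.mp hf1⟩
    · rintro ⟨f, hf1, hf2⟩
      exact ⟨f, Module.End.mem_eigenspace_iff.mpr hf2, hf1⟩
  rw [hspecL]
  simp only [Set.mem_iUnion]
  constructor
  · rintro ⟨f, hf0, hf1⟩
    obtain ⟨v, rfl⟩ := hΦsurj f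
    have hv0 : v ≠ 0 := fun h => hf0 (by rw [h, _root_.map_zero])
    have hDv : D v = lam • v := by
      apply hΦinj
      show Φ (fun c => (Lc c).mulVec (v c)) = Φ (lam • v)
      rw [← hint, hf1, _root_.map_smul]
    obtain ⟨c, hc⟩ : ∃ c, v c ≠ 0 := by
      by_contra h
      push_neg at h
      exact hv0 (funext h)
    refine ⟨c, (hspecMat c).mpr ⟨v c, hc, ?_⟩⟩
    have := congrFun hDv c
    rw [hDapp] at this
    exact this
  · rintro ⟨c, hc⟩
    obtain ⟨u, hu0, hu1⟩ := (hspecMat c).mp hc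
    set v : LatticeTorus n Mᵀ → Fin m → ℂ := Pi.single c u with hv
    have hv0 : v ≠ 0 := by
      intro h
      apply hu0
      have := congrFun h c
      rwa [hv, Pi.single_eq_same] at this
    have hDv : D v = lam • v := by
      funext c'
      rw [hDapp]
      by_cases hcc : c' = c
      · subst hcc
        rw [hv, Pi.single_eq_same, hu1, Pi.smul_apply, Pi.single_eq_same]
      · rw [hv, Pi.single_eq_of_ne hcc, Matrix.mulVec_zero, Pi.smul_apply,
          Pi.single_eq_of_ne hcc, smul_zero]
    refine ⟨Φ v, fun h => hv0 (hΦinj (by rw [h, _root_.map_zero])), ?_⟩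
    rw [show L (Φ v) = Φ (fun c => (Lc c).mulVec (v c)) from hint v]
    rw [show (fun c => (Lc c).mulVec (v c)) = D v from rfl, hDv, _root_.map_smul]
end

section
/- Let A, B ∈ GL_n(ℝ) and suppose there exists a nonzero r ∈ ℤ such that M := r·A^{-1}·B ∈ ℤ^{n×n}. Let S = V^{-1}·M·T^{-1} be a Smith decomposition of M (V, T ∈ ℤ^{n×n} unimodular, S in Smith normal form with diagonal entries s_1,…,s_n), let N be the diagonal integer matrix with N_{ii} = r / gcd(r, s_i), and set C := B·T^{-1}·N. Then (i) L(C) ⊆ L(A) and L(C) ⊆ L(B), and (ii) C has minimal determinant in absolute value among all common sublattices: for every invertible D ∈ ℝ^{n×n} with L(D) ⊆ L(A) and L(D) ⊆ L(B) one has |det D| ≥ |det C|. -/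
/-!
Write `sᵢ` for the diagonal of `S` and `gᵢ = gcd(r, sᵢ)`. Since `r·A⁻¹·B = V·S·T`, we get
`A⁻¹·C = r⁻¹·V·S·N = V·diag(sᵢ / gᵢ)`, which is integral, while `B⁻¹·C = T⁻¹·N` is integral
because `T` is unimodular. Conversely, if `D = A·P = B·Q` with `P, Q` integral, then
`S·(T·Q) = r·V⁻¹·P`, so `r ∣ sᵢ·(T·Q)ᵢⱼ` and hence `r / gᵢ ∣ (T·Q)ᵢⱼ`, i.e. `T·Q = N·Q'` with
`Q'` integral. Thus `D = C·Q'`, and `|det D| = |det C|·|det Q'| ≥ |det C|`.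
-/

open Matrix

/-- The lattice `L(A) = Aℤⁿ ⊆ ℝⁿ` spanned over `ℤ` by the columns of `A`. -/
def lattice (n : ℕ) (A : Matrix (Fin n) (Fin n) ℝ) : Set (Fin n → ℝ) :=
  {x | ∃ j : Fin n → ℤ, x = A.mulVec fun i => (j i : ℝ)}

theorem Int.ediv_gcd_dvd_of_dvd_mul {r s q : ℤ} (hr : r ≠ 0) (h : r ∣ s * q) :
    r / (Int.gcd r s : ℤ) ∣ q := by
  have hg : 0 < Int.gcd r s := Int.gcd_pos_of_ne_zero_left s hr
  have h' : r / Int.gcd r s ∣ s / Int.gcd r s * q := by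
    rw [mul_comm, ← Int.mul_ediv_assoc q (Int.gcd_dvd_right _ _), mul_comm]
    exact Int.ediv_dvd_ediv (Int.gcd_dvd_left _ _) h
  exact Int.dvd_of_dvd_mul_right_of_gcd_one h' (Int.gcd_div_gcd_div_gcd hg)

section
variable {ι : Type*} {R : Type*}

theorem Matrix.map_intCast_zsmul [Ring R] (r : ℤ) (M : Matrix ι ι ℤ) :
    (r • M).map (Int.cast : ℤ → R) = (r : R) • M.map Int.cast := by
  ext; simp

theorem Matrix.map_intCast_injective [Ring R] [CharZero R] :
    Function.Injective fun M : Matrix ι ι ℤ => M.map (Int.cast : ℤ → R) :=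
  Matrix.map_injective Int.cast_injective

variable [Fintype ι]

theorem Matrix.map_intCast_mul [Ring R] (M N : Matrix ι ι ℤ) :
    (M * N).map (Int.cast : ℤ → R) = M.map Int.cast * N.map Int.cast :=
  Matrix.map_mul (f := Int.castRingHom R)

theorem Matrix.inv_map_intCast [DecidableEq ι] [CommRing R] {T : Matrix ι ι ℤ}
    (hT : IsUnit T.det) :
    (T.map (Int.cast : ℤ → R))⁻¹ = T⁻¹.map Int.cast := by
  apply inv_eq_right_inv
  rw [← map_intCast_mul, mul_nonsing_inv T hT, Matrix.map_one _ Int.cast_zero Int.cast_one]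

theorem Matrix.det_map_intCast [DecidableEq ι] [CommRing R] (T : Matrix ι ι ℤ) :
    (T.map (Int.cast : ℤ → R)).det = T.det :=
  (RingHom.map_det (Int.castRingHom R) T).symm

variable [DecidableEq ι]

theorem Matrix.diagonal_mul_diagonal_ediv_gcd (r : ℤ) (s : ι → ℤ) :
    diagonal s * diagonal (fun i => r / (Int.gcd r (s i) : ℤ)) =
      r • diagonal fun i => s i / (Int.gcd r (s i) : ℤ) := by
  rw [diagonal_mul_diagonal, ← diagonal_smul]
  congr 1
  funext i
  rw [← Int.mul_ediv_assoc _ (Int.gcd_dvd_left _ _), mul_comm (s i),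
    Int.mul_ediv_assoc _ (Int.gcd_dvd_right _ _), Pi.smul_apply, smul_eq_mul]

theorem Matrix.exists_eq_diagonal_ediv_gcd_mul {r : ℤ} (hr : r ≠ 0) {s : ι → ℤ}
    {X Y : Matrix ι ι ℤ} (h : diagonal s * X = r • Y) :
    ∃ Q : Matrix ι ι ℤ, X = diagonal (fun i => r / (Int.gcd r (s i) : ℤ)) * Q := by
  have hdvd : ∀ i j, r / (Int.gcd r (s i) : ℤ) ∣ X i j := fun i j =>
    Int.ediv_gcd_dvd_of_dvd_mul hr ⟨Y i j, by simpa using congrFun (congrFun h i) j⟩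
  refine ⟨of fun i j => X i j / (r / (Int.gcd r (s i) : ℤ)), ?_⟩
  ext i j
  rw [diagonal_mul, of_apply, Int.mul_ediv_cancel' (hdvd i j)]

end

section

variable {n : ℕ}

theorem lattice_subset_lattice_iff {A D : Matrix (Fin n) (Fin n) ℝ} :
    lattice n D ⊆ lattice n A ↔ ∃ E : Matrix (Fin n) (Fin n) ℤ, D = A * E.map Int.cast := by
  constructor
  · intro h
    have hcol : ∀ j, ∃ w : Fin n → ℤ, (fun i => D i j) = A *ᵥ fun i => (w i : ℝ) := fun j =>
      h ⟨Pi.single j 1, by ext i; simp [mulVec, dotProduct, Pi.single_apply]⟩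
    choose w hw using hcol
    refine ⟨of fun k j => w j k, ?_⟩
    ext i j
    simpa [mul_apply, mulVec, dotProduct] using congrFun (hw j) i
  · rintro ⟨E, rfl⟩ x ⟨j, rfl⟩
    refine ⟨E *ᵥ j, ?_⟩
    rw [← mulVec_mulVec]
    congr 1
    ext i
    simp [mulVec, dotProduct]

theorem abs_det_le_abs_det_of_lattice_subset {C D : Matrix (Fin n) (Fin n) ℝ}
    (hD : D.det ≠ 0) (h : lattice n D ⊆ lattice n C) : |C.det| ≤ |D.det| := by
  obtain ⟨E, rfl⟩ := lattice_subset_lattice_iff.1 h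
  rw [det_mul, det_map_intCast] at hD ⊢
  have hE : E.det ≠ 0 := by rintro h0; simp [h0] at hD
  rw [abs_mul]
  refine le_mul_of_one_le_right (abs_nonneg _) ?_
  rw [← Int.cast_abs]
  exact_mod_cast Int.one_le_abs hE

end

theorem lattice_least_common_multiple_general
    (n : ℕ) (A B : Matrix (Fin n) (Fin n) ℝ)
    (hA : IsUnit A.det)
    (r : ℤ) (hr : r ≠ 0)
    (M V S T : Matrix (Fin n) (Fin n) ℤ)
    (hM : (r : ℝ) • (A⁻¹ * B) = M.map (Int.cast : ℤ → ℝ))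
    (hV : V.det = 1 ∨ V.det = -1)
    (hT : T.det = 1 ∨ T.det = -1)
    (hSmith : V * S * T = M)
    (hSdiag : ∀ i j : Fin n, i ≠ j → S i j = 0)
    (N : Matrix (Fin n) (Fin n) ℤ)
    (hN : N = Matrix.diagonal fun i => r / (Int.gcd r (S i i) : ℤ))
    (C : Matrix (Fin n) (Fin n) ℝ)
    (hC : C = B * (T.map (Int.cast : ℤ → ℝ))⁻¹ * N.map (Int.cast : ℤ → ℝ)) :
    lattice n C ⊆ lattice n A ∧ lattice n C ⊆ lattice n B ∧
      ∀ D : Matrix (Fin n) (Fin n) ℝ, IsUnit D.det →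
        lattice n D ⊆ lattice n A → lattice n D ⊆ lattice n B →
          |C.det| ≤ |D.det| := by
  obtain ⟨s, rfl⟩ : ∃ s, S = diagonal s :=
    ⟨S.diag, (IsDiag.diagonal_diag fun i j => hSdiag i j).symm⟩
  simp only [diagonal_apply_eq] at hN
  set E := diagonal fun i => s i / (Int.gcd r (s i) : ℤ)
  have hTu : IsUnit T.det := Int.isUnit_iff.2 hT
  have hCB : C = B * (T⁻¹ * N).map Int.cast := by
    rw [hC, map_intCast_mul, inv_map_intCast hTu, Matrix.mul_assoc]
  have hMC : M * (T⁻¹ * N) = r • (V * E) := by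
    rw [← hSmith, Matrix.mul_assoc, Matrix.mul_assoc, mul_nonsing_inv_cancel_left _ _ hTu, hN,
      diagonal_mul_diagonal_ediv_gcd, Matrix.mul_smul]
  have hCA : C = A * (V * E).map Int.cast := by
    refine smul_right_injective _ (Int.cast_ne_zero.2 hr : (r : ℝ) ≠ 0) ?_
    calc (r : ℝ) • C = A * ((r : ℝ) • (A⁻¹ * B)) * (T⁻¹ * N).map Int.cast := by
          rw [Matrix.mul_smul, mul_nonsing_inv_cancel_left _ _ hA, Matrix.smul_mul, hCB]
      _ = (r : ℝ) • (A * (V * E).map Int.cast) := by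
          rw [hM, Matrix.mul_assoc, ← map_intCast_mul, hMC, map_intCast_zsmul, Matrix.mul_smul]
  refine ⟨lattice_subset_lattice_iff.2 ⟨_, hCA⟩, lattice_subset_lattice_iff.2 ⟨_, hCB⟩, ?_⟩
  intro D hD hDA hDB
  obtain ⟨P, hP⟩ := lattice_subset_lattice_iff.1 hDA
  obtain ⟨Q, hQ⟩ := lattice_subset_lattice_iff.1 hDB
  have hMQ : M * Q = r • P := map_intCast_injective (R := ℝ) <| by
    dsimp only
    rw [map_intCast_mul, ← hM, map_intCast_zsmul, Matrix.smul_mul, Matrix.mul_assoc, ← hQ, hP,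
      nonsing_inv_mul_cancel_left _ _ hA]
  have hSTQ : diagonal s * (T * Q) = r • (V⁻¹ * P) := by
    rw [← Matrix.mul_smul, ← hMQ, ← hSmith, Matrix.mul_assoc V, Matrix.mul_assoc V,
      nonsing_inv_mul_cancel_left _ _ (Int.isUnit_iff.2 hV), Matrix.mul_assoc]
  obtain ⟨Q', hQ'⟩ := exists_eq_diagonal_ediv_gcd_mul hr hSTQ
  refine abs_det_le_abs_det_of_lattice_subset hD.ne_zero (lattice_subset_lattice_iff.2 ⟨Q', ?_⟩)
  rw [hQ, hCB, Matrix.mul_assoc, ← map_intCast_mul, Matrix.mul_assoc, hN, ← hQ',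
    nonsing_inv_mul_cancel_left _ _ hTu]

/-- Least common multiple of two lattices: if `M = r·A⁻¹·B` is integral with Smith
decomposition `S = V⁻¹·M·T⁻¹`, and `N` is diagonal with `N_{ii} = r / gcd(r, sᵢ)`, then
`C = B·T⁻¹·N` spans a common sublattice of `L(A)` and `L(B)` of minimal determinant in
absolute value. -/
theorem lattice_least_common_multiple
    (n : ℕ) (A B : Matrix (Fin n) (Fin n) ℝ)
    (hA : IsUnit A.det) (hB : IsUnit B.det)
    (r : ℤ) (hr : r ≠ 0)
    (M V S T : Matrix (Fin n) (Fin n) ℤ)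
    (hM : (r : ℝ) • (A⁻¹ * B) = M.map (Int.cast : ℤ → ℝ))
    (hV : V.det = 1 ∨ V.det = -1)
    (hT : T.det = 1 ∨ T.det = -1)
    (hSmith : V * S * T = M)
    (hSdiag : ∀ i j : Fin n, i ≠ j → S i j = 0)
    (hSdiv : ∀ i : Fin n, ∀ h : (i : ℕ) + 1 < n,
      S i i ∣ S ⟨(i : ℕ) + 1, h⟩ ⟨(i : ℕ) + 1, h⟩)
    (N : Matrix (Fin n) (Fin n) ℤ)
    (hN : N = Matrix.diagonal fun i => r / (Int.gcd r (S i i) : ℤ))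
    (C : Matrix (Fin n) (Fin n) ℝ)
    (hC : C = B * (T.map (Int.cast : ℤ → ℝ))⁻¹ * N.map (Int.cast : ℤ → ℝ)) :
    lattice n C ⊆ lattice n A ∧ lattice n C ⊆ lattice n B ∧
      ∀ D : Matrix (Fin n) (Fin n) ℝ, IsUnit D.det →
        lattice n D ⊆ lattice n A → lattice n D ⊆ lattice n B →
          |C.det| ≤ |D.det| :=
  lattice_least_common_multiple_general n A B hA r hr M V S T hM hV hT hSmith hSdiag N hN C hC
end

section
/- Let G be a finite abelian group, K ≤ G a subgroup, and t_1,…,t_p ∈ G a complete set of representatives of the cosets of K in G. Let L : (G → ℂ^q) → (G → ℂ^r) be the multiplication operator with multipliers m_L : G → ℂ^{r×q}. For s ∈ {q, r} define the map η_s : (G → ℂ^s) → (K → ℂ^{p·s}) by ((η_s f)(x))_{(i,a)} = (f(x + t_i))_a for x ∈ K, i ∈ {1,…,p}, a ∈ {1,…,s} (η_s is a linear bijection). Define the multiplication operator G' : (K → ℂ^{p·q}) → (K → ℂ^{p·r}) with block multipliers m_{G'} : K → ℂ^{(p·r)×(p·q)} given by (m_{G'}(y))_{(i,a),(k,b)}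 = (m_L(y − t_i + t_k))_{a,b}. Then the diagram commutes: η_r ∘ L = G' ∘ η_q. -/
open Matrix

/-! Since `t` is a complete set of coset representatives, every `g ∈ G` is uniquely `y + t k`
with `y ∈ K`, so a sum over `G` splits into a sum over `K` and the representatives.
Substituting `g = y - t i + t k` in the sum defining `L` produces exactly the block entries of
`m_{G'}`. -/

theorem AddSubgroup.bijective_add_of_coset_reps {G ι : Type*} [AddCommGroup G]
    (K : AddSubgroup G) (t : ι → G)
    (hdist : ∀ i j, i ≠ j → t i - t j ∉ K) (hfull : ∀ g, ∃ i, g - t i ∈ K) :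
    Function.Bijective (fun yk : K × ι => (yk.1 : G) + t yk.2) := by
  constructor
  · rintro ⟨y, k⟩ ⟨y', k'⟩ h
    have hdiff : t k - t k' = (y' : G) - y := by
      simp only at h
      rw [sub_eq_sub_iff_add_eq_add, add_comm, h]
    obtain rfl : k = k' := by
      by_contra hne
      exact hdist k k' hne (hdiff ▸ sub_mem y'.2 y.2)
    exact Prod.ext (Subtype.ext (add_right_cancel h)) rfl
  · intro g
    obtain ⟨k, hk⟩ := hfull g
    exact ⟨(⟨g - t k, hk⟩, k), sub_add_cancel g (t k)⟩

theorem AddSubgroup.sum_eq_sum_sum_add_coset_reps {G ι M : Type*} [AddCommGroup G] [Fintype G]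
    [Fintype ι] [AddCommMonoid M] (K : AddSubgroup G) [Fintype K] (t : ι → G)
    (hdist : ∀ i j, i ≠ j → t i - t j ∉ K) (hfull : ∀ g, ∃ i, g - t i ∈ K) (F : G → M) :
    ∑ g, F g = ∑ y : K, ∑ k, F (y + t k) := by
  rw [← Fintype.sum_prod_type']
  exact (Fintype.sum_bijective _ (K.bijective_add_of_coset_reps t hdist hfull) _ _
    fun _ => rfl).symm

/-- Rewriting a multiplication operator with respect to a subgroup (sublattice):
if `t₁,…,t_p` is a complete set of coset representatives of `K ≤ G` and `L` is a
multiplication operator on `G` with multipliers `m_L`, then with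
`(m_{G'}(y))_{(i,a),(k,b)} = (m_L(y − tᵢ + t_k))_{a,b}` one has `η_r ∘ L = G' ∘ η_q`,
where `(η_s f)(x)_{(i,a)} = f(x + tᵢ)_a`. -/
theorem multiplication_operator_sublattice_rewrite
    {G : Type*} [AddCommGroup G] [Fintype G] (q r p : ℕ)
    (K : AddSubgroup G) [Fintype K]
    (t : Fin p → G)
    (htdist : ∀ i j : Fin p, i ≠ j → t i - t j ∉ K)
    (htfull : ∀ g : G, ∃ i : Fin p, g - t i ∈ K)
    (mL : G → Matrix (Fin r) (Fin q) ℂ) :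
    ∀ (f : G → Fin q → ℂ) (x : K) (ia : Fin p × Fin r),
      (∑ y : G, (mL y).mulVec (f ((x : G) + t ia.1 + y))) ia.2 =
      (∑ y : K,
        (Matrix.of fun (ja : Fin p × Fin r) (kb : Fin p × Fin q) =>
          mL ((y : G) - t ja.1 + t kb.1) ja.2 kb.2).mulVec
          (fun kb : Fin p × Fin q => f ((x : G) + (y : G) + t kb.1) kb.2)) ia := by
  rintro f x ⟨i, a⟩
  simp only [Finset.sum_apply, mulVec, dotProduct, of_apply, Fintype.sum_prod_type]
  rw [← (Equiv.subRight (t i)).sum_comp, K.sum_eq_sum_sum_add_coset_reps t htdist htfull]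
  refine Finset.sum_congr rfl fun y _ => Finset.sum_congr rfl fun k _ => ?_
  rw [Equiv.subRight_apply, show (y : G) + t k - t i = y - t i + t k by abel,
    show (x : G) + t i + (y - t i + t k) = x + y + t k by abel]
end
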